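/- Let (I ∪ J, w_A) be an assignment game induced by a nonnegative matrix A, and suppose it is PMAS-admissible. If a row i ∈ I contains two positive entries a_{ij} > 0 and a_{ij'} > 0 with j ≠ j', then at most one of the two columns j, j' contains a positive entry outside row i; i.e., it cannot happen that both a_{kj} > 0 for some k ≠ i and a_{k'j'} > 0 for some k' ≠ i. -/
import Mathlib


open Finset

/-- A population monotonic allocation scheme (PMAS) for the TU game `w` on the
finite player set `α`: subgame efficiency on every nonempty coalition, and
individual payoff monotonicity along coalition inclusion. -/
def IsPMAS {α : Type*} [Fintype α] (w : Finset α → ℝ) (x : Finset α → α → ℝ) : Prop :=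
  (∀ S : Finset α, S.Nonempty → ∑ i ∈ S, x S i = w S) ∧
  (∀ S T : Finset α, S ⊆ T → ∀ i ∈ S, x S i ≤ x T i)

/-- `μ` is a matching inside coalition `S`: every pair uses players of `S`,
and each player appears in at most one pair. -/
def IsMatching {I J : Type*} (S : Finset (I ⊕ J)) (μ : Finset (I × J)) : Prop :=
  (∀ p ∈ μ, Sum.inl p.1 ∈ S ∧ Sum.inr p.2 ∈ S) ∧
  (∀ p ∈ μ, ∀ q ∈ μ, p.1 = q.1 → p = q) ∧
  (∀ p ∈ μ, ∀ q ∈ μ, p.2 = q.2 → p = q)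

/-- The assignment game induced by the matrix `A`. -/
noncomputable def assignGame {I J : Type*} [Fintype I] [Fintype J]
    (A : I → J → ℝ) (S : Finset (I ⊕ J)) : ℝ :=
  sSup ((fun μ : Finset (I × J) => ∑ p ∈ μ, A p.1 p.2) '' {μ | IsMatching S μ})

/-- `x` is a core allocation of the game `w`. -/
def InCore {α : Type*} [Fintype α] (w : Finset α → ℝ) (x : α → ℝ) : Prop :=
  (∑ i, x i) = w Finset.univ ∧ ∀ S : Finset α, w S ≤ ∑ i ∈ S, x i

/-- `x` is PMAS-extendable in the game `w`. -/
def PMASExtendable {α : Type*} [Fintype α] (w : Finset α → ℝ) (x : α → ℝ) : Prop :=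
  ∃ y, IsPMAS w y ∧ ∀ i, y Finset.univ i = x i

/-- The upper (utopia) vector. -/
noncomputable def upperVec {α : Type*} [Fintype α] [DecidableEq α]
    (v : Finset α → ℝ) (i : α) : ℝ :=
  v Finset.univ - v (Finset.univ.erase i)

/-- The lower (minimal right) vector. -/
noncomputable def lowerVec {α : Type*} [Fintype α] [DecidableEq α]
    (v : Finset α → ℝ) (i : α) : ℝ :=
  sSup {t | ∃ S : Finset α, i ∈ S ∧ t = v S - ∑ j ∈ S.erase i, upperVec v j}

/-- `τ` is a tau-value of the game `v`. -/
def IsTauValue {α : Type*} [Fintype α] [DecidableEq α] (v : Finset α → ℝ) (τ : α → ℝ) : Prop :=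
  ∃ κ : ℝ, 0 ≤ κ ∧ κ ≤ 1 ∧ (∀ i, τ i = κ * upperVec v i + (1 - κ) * lowerVec v i) ∧
    ∑ i, τ i = v Finset.univ

open scoped Classical in
/-- The nondecreasingly ordered list of satisfactions of the nonempty proper
coalitions at allocation `x`. -/
noncomputable def satList {α : Type*} [Fintype α] (v : Finset α → ℝ) (x : α → ℝ) : List ℝ :=
  ((Finset.univ.filter (fun S : Finset α => S.Nonempty ∧ S ≠ Finset.univ)).val.map
    (fun S => ∑ i ∈ S, x i - v S)).sort (· ≤ ·)

/-- `x` is the nucleolus of `v`: a core allocation lexicographically maximizing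
the nondecreasingly ordered satisfaction vector over the core. -/
noncomputable def IsNucleolus {α : Type*} [Fintype α] (v : Finset α → ℝ) (x : α → ℝ) : Prop :=
  InCore v x ∧ ∀ y, InCore v y →
    satList v y = satList v x ∨ List.Lex (· < ·) (satList v y) (satList v x)

/-- `A` has Γ-shaped support with corner `(i1, j1)`. -/
def GammaShaped {I J : Type*} (A : I → J → ℝ) (i1 : I) (j1 : J) : Prop :=
  (∀ k l, (k = i1 ∨ l = j1) → 0 < A k l) ∧ (∀ k l, k ≠ i1 → l ≠ j1 → A k l = 0)

/-- The corner `(i1, j1)` of `A` is dominant. -/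
def DominantCorner {I J : Type*} (A : I → J → ℝ) (i1 : I) (j1 : J) : Prop :=
  ∀ k l, k ≠ i1 → l ≠ j1 → A i1 l + A k j1 ≤ A i1 j1

section AuxPMAS

open scoped Classical

variable {I J : Type*} [Fintype I] [Fintype J]

lemma isMatching_empty (S : Finset (I ⊕ J)) : IsMatching S (∅ : Finset (I × J)) := by
  refine ⟨?_, ?_, ?_⟩ <;> intro p hp <;> simp at hp

lemma assignGame_le (A : I → J → ℝ) (S : Finset (I ⊕ J)) (M : ℝ)
    (h : ∀ μ : Finset (I × J), IsMatching S μ → ∑ p ∈ μ, A p.1 p.2 ≤ M) :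
    assignGame A S ≤ M := by
  apply csSup_le
  · exact ⟨0, ⟨∅, isMatching_empty S, by simp⟩⟩
  · rintro x ⟨μ, hμ, rfl⟩
    exact h μ hμ

lemma le_assignGame (A : I → J → ℝ) (S : Finset (I ⊕ J)) (μ : Finset (I × J))
    (hμ : IsMatching S μ) : ∑ p ∈ μ, A p.1 p.2 ≤ assignGame A S := by
  apply le_csSup
  · exact ((Set.toFinite {ν : Finset (I × J) | IsMatching S ν}).image _).bddAbove
  · exact ⟨μ, hμ, rfl⟩

lemma assignGame_pair (A : I → J → ℝ) (hA : ∀ i j, 0 ≤ A i j) (i : I) (j : J) :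
    assignGame A {Sum.inl i, Sum.inr j} = A i j := by
  apply le_antisymm
  · apply assignGame_le
    rintro μ ⟨hmem, -, -⟩
    have hsub : μ ⊆ {(i, j)} := by
      intro p hp
      obtain ⟨h1, h2⟩ := hmem p hp
      simp only [Finset.mem_insert, Finset.mem_singleton, Sum.inl.injEq,
        Sum.inr.injEq, reduceCtorEq, or_false, false_or] at h1 h2
      simp [Prod.ext_iff, h1, h2]
    calc ∑ p ∈ μ, A p.1 p.2 ≤ ∑ p ∈ ({(i, j)} : Finset (I × J)), A p.1 p.2 :=
          Finset.sum_le_sum_of_subset_of_nonneg hsub (fun p _ _ => hA p.1 p.2)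
      _ = A i j := by simp
  · have h := le_assignGame A {Sum.inl i, Sum.inr j} {(i, j)} ?_
    · simpa using h
    · refine ⟨?_, ?_, ?_⟩
      · intro p hp
        simp only [Finset.mem_singleton] at hp
        subst hp
        simp
      · intro p hp q hq _
        simp only [Finset.mem_singleton] at hp hq
        rw [hp, hq]
      · intro p hp q hq _
        simp only [Finset.mem_singleton] at hp hq
        rw [hp, hq]

lemma assignGame_row_triple (A : I → J → ℝ) (hA : ∀ i j, 0 ≤ A i j) (i : I) (j j' : J) :
    assignGame A {Sum.inl i, Sum.inr j, Sum.inr j'} ≤ max (A i j) (A i j') := by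
  apply assignGame_le
  rintro μ ⟨hmem, huniq, -⟩
  rcases μ.eq_empty_or_nonempty with rfl | ⟨p, hp⟩
  · simpa using le_max_of_le_left (hA i j)
  · have hall : ∀ q ∈ μ, q = p := by
      intro q hq
      have h1 : q.1 = i := by
        have := (hmem q hq).1
        simpa using this
      have h2 : p.1 = i := by
        have := (hmem p hp).1
        simpa using this
      exact huniq q hq p hp (h1.trans h2.symm)
    have hμ : μ = {p} := Finset.eq_singleton_iff_unique_mem.2 ⟨hp, hall⟩
    have hp1 : p.1 = i := by
      have := (hmem p hp).1
      simpa using this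
    have hp2 : p.2 = j ∨ p.2 = j' := by
      have := (hmem p hp).2
      simpa using this
    rw [hμ, Finset.sum_singleton, hp1]
    rcases hp2 with h | h
    · rw [h]; exact le_max_left _ _
    · rw [h]; exact le_max_right _ _

lemma assignGame_col_triple (A : I → J → ℝ) (hA : ∀ i j, 0 ≤ A i j) (i k : I) (j : J) :
    assignGame A {Sum.inl i, Sum.inl k, Sum.inr j} ≤ max (A i j) (A k j) := by
  apply assignGame_le
  rintro μ ⟨hmem, -, huniq⟩
  rcases μ.eq_empty_or_nonempty with rfl | ⟨p, hp⟩
  · simpa using le_max_of_le_left (hA i j)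
  · have hall : ∀ q ∈ μ, q = p := by
      intro q hq
      have h1 : q.2 = j := by
        have := (hmem q hq).2
        simpa using this
      have h2 : p.2 = j := by
        have := (hmem p hp).2
        simpa using this
      exact huniq q hq p hp (h1.trans h2.symm)
    have hμ : μ = {p} := Finset.eq_singleton_iff_unique_mem.2 ⟨hp, hall⟩
    have hp2 : p.2 = j := by
      have := (hmem p hp).2
      simpa using this
    have hp1 : p.1 = i ∨ p.1 = k := by
      have := (hmem p hp).1
      simpa using this
    rw [hμ, Finset.sum_singleton, hp2]
    rcases hp1 with h | h
    · rw [h]; exact le_max_left _ _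
    · rw [h]; exact le_max_right _ _

/-- Key inequality: in a PMAS-admissible assignment game, for any `k ≠ i` and
`j ≠ j'` one has `min (A i j) (A i j') + min (A i j) (A k j) ≤ A i j`. -/
lemma assignGame_pmas_key (A : I → J → ℝ) (hA : ∀ i j, 0 ≤ A i j)
    (y : Finset (I ⊕ J) → (I ⊕ J) → ℝ) (hy : IsPMAS (assignGame A) y)
    (i k : I) (j j' : J) (hk : k ≠ i) (hjj' : j ≠ j') :
    min (A i j) (A i j') + min (A i j) (A k j) ≤ A i j := by
  obtain ⟨heff, hmono⟩ := hy
  set Pij : Finset (I ⊕ J) := {Sum.inl i, Sum.inr j} with hPij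
  set Pij' : Finset (I ⊕ J) := {Sum.inl i, Sum.inr j'} with hPij'
  set Pkj : Finset (I ⊕ J) := {Sum.inl k, Sum.inr j} with hPkj
  -- pair efficiency
  have epair : y Pij (Sum.inl i) + y Pij (Sum.inr j) = A i j := by
    have h := heff Pij ⟨_, Finset.mem_insert_self _ _⟩
    rwa [hPij, Finset.sum_pair (by simp), assignGame_pair A hA] at h
  have epair' : y Pij' (Sum.inl i) + y Pij' (Sum.inr j') = A i j' := by
    have h := heff Pij' ⟨_, Finset.mem_insert_self _ _⟩
    rwa [hPij', Finset.sum_pair (by simp), assignGame_pair A hA] at h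
  have epairk : y Pkj (Sum.inl k) + y Pkj (Sum.inr j) = A k j := by
    have h := heff Pkj ⟨_, Finset.mem_insert_self _ _⟩
    rwa [hPkj, Finset.sum_pair (by simp), assignGame_pair A hA] at h
  -- the coalition {i; j, j'}
  set U : Finset (I ⊕ J) := {Sum.inl i, Sum.inr j, Sum.inr j'} with hU
  have eU : y U (Sum.inl i) + (y U (Sum.inr j) + y U (Sum.inr j')) = assignGame A U := by
    have h := heff U ⟨_, Finset.mem_insert_self _ _⟩
    rwa [hU, Finset.sum_insert (by simp), Finset.sum_pair (by simp [hjj'])] at h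
  have hUle : assignGame A U ≤ max (A i j) (A i j') := assignGame_row_triple A hA i j j'
  have m1 : y Pij (Sum.inr j) ≤ y U (Sum.inr j) :=
    hmono Pij U (by rw [hPij, hU]; intro x hx; simp at hx ⊢; tauto) _ (by simp [hPij])
  have m2 : y Pij' (Sum.inl i) ≤ y U (Sum.inl i) :=
    hmono Pij' U (by rw [hPij', hU]; intro x hx; simp at hx ⊢; tauto) _ (by simp [hPij'])
  have m3 : y Pij' (Sum.inr j') ≤ y U (Sum.inr j') :=
    hmono Pij' U (by rw [hPij', hU]; intro x hx; simp at hx ⊢; tauto) _ (by simp [hPij'])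
  have hia : min (A i j) (A i j') ≤ y Pij (Sum.inl i) := by
    have hmm : min (A i j) (A i j') + max (A i j) (A i j') = A i j + A i j' :=
      min_add_max _ _
    linarith
  -- the coalition {i, k; j}
  set P : Finset (I ⊕ J) := {Sum.inl i, Sum.inl k, Sum.inr j} with hP
  have eP : y P (Sum.inl i) + (y P (Sum.inl k) + y P (Sum.inr j)) = assignGame A P := by
    have h := heff P ⟨_, Finset.mem_insert_self _ _⟩
    rwa [hP, Finset.sum_insert (by simp [Ne.symm hk]), Finset.sum_pair (by simp)] at h
  have hPle : assignGame A P ≤ max (A i j) (A k j) := assignGame_col_triple A hA i k j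
  have m4 : y Pij (Sum.inl i) ≤ y P (Sum.inl i) :=
    hmono Pij P (by rw [hPij, hP]; intro x hx; simp at hx ⊢; tauto) _ (by simp [hPij])
  have m5 : y Pkj (Sum.inl k) ≤ y P (Sum.inl k) :=
    hmono Pkj P (by rw [hPkj, hP]; intro x hx; simp at hx ⊢; tauto) _ (by simp [hPkj])
  have m6 : y Pkj (Sum.inr j) ≤ y P (Sum.inr j) :=
    hmono Pkj P (by rw [hPkj, hP]; intro x hx; simp at hx ⊢; tauto) _ (by simp [hPkj])
  have hja : min (A i j) (A k j) ≤ y Pij (Sum.inr j) := by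
    have hmm : min (A i j) (A k j) + max (A i j) (A k j) = A i j + A k j :=
      min_add_max _ _
    linarith
  linarith

end AuxPMAS

/-- In a PMAS-admissible assignment game, if a row `i` has two
positive entries, in columns `j ≠ j'`, then it cannot happen that both columns
contain a positive entry outside row `i`. -/
theorem assignGame_pmas_row_claim {I J : Type*} [Fintype I] [Fintype J]
    (A : I → J → ℝ) (hA : ∀ i j, 0 ≤ A i j)
    (hadm : ∃ y, IsPMAS (assignGame A) y)
    (i : I) (j j' : J) (hjj' : j ≠ j') (h1 : 0 < A i j) (h2 : 0 < A i j') :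
    ¬ ((∃ k, k ≠ i ∧ 0 < A k j) ∧ (∃ k', k' ≠ i ∧ 0 < A k' j')) := by
  rintro ⟨⟨k, hk, hc⟩, ⟨k', hk', hd⟩⟩
  obtain ⟨y, hy⟩ := hadm
  have L1 := assignGame_pmas_key A hA y hy i k j j' hk hjj'
  have L2 := assignGame_pmas_key A hA y hy i k' j' j hk' hjj'.symm
  have p1 : 0 < min (A i j) (A k j) := lt_min h1 hc
  have p2 : 0 < min (A i j') (A k' j') := lt_min h2 hd
  have hba : A i j' < A i j := by
    rcases le_total (A i j) (A i j') with h | h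
    · rw [min_eq_left h] at L1; linarith
    · rw [min_eq_right h] at L1; linarith
  have hab : A i j < A i j' := by
    rcases le_total (A i j') (A i j) with h | h
    · rw [min_eq_left h] at L2; linarith
    · rw [min_eq_right h] at L2; linarith
  linarith
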